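/- arXiv:1009.2937 — 5 statements merged into one kernel-verified Lean document; each statement's English description precedes it below -/
import Mathlib

section
/- For every real number x ≥ 1 there is a plan with x tankloads in the single-jeep model that reaches a state in which the jeep's position equals F(x). (In particular, with 2 5/6 tankloads the jeep can cross a desert 1 1/2 units wide.) -/
/-- A state of the single-jeep model: the jeep's position, the fuel in its
tank, and a finitely supported function recording the fuel in depots. -/
structure JeepState where
  pos : ℝ
  tank : ℝ
  depot : ℝ →₀ ℝ

/-- Admissible moves of the single-jeep model: either drive (consuming one
tankload per unit of distance), or transfer fuel between the tank and the
depot at the jeep's current position. -/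
inductive JeepStep : JeepState → JeepState → Prop
  | drive (s : JeepState) (p' : ℝ)
      (h : 0 ≤ s.tank - |p' - s.pos|) :
      JeepStep s ⟨p', s.tank - |p' - s.pos|, s.depot⟩
  | transfer (s : JeepState) (t' : ℝ) (D' : ℝ →₀ ℝ)
      (hcons : t' + D' s.pos = s.tank + s.depot s.pos)
      (ht0 : 0 ≤ t') (ht1 : t' ≤ 1)
      (hD : ∀ q, 0 ≤ D' q)
      (heq : ∀ q, q ≠ s.pos → D' q = s.depot q) :
      JeepStep s ⟨s.pos, t', D'⟩

/-- The initial state of a plan with `x` tankloads: the jeep is at `0` with an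
empty tank, and `x` tankloads of fuel are stored at position `0`. -/
noncomputable def jeepInit (x : ℝ) : JeepState :=
  ⟨0, 0, Finsupp.single 0 x⟩

/-- `F x = Σ_{k=1}^{⌈x⌉−1} 1/(2k−1) + (x − ⌈x⌉ + 1)/(2⌈x⌉ − 1)`. -/
noncomputable def F (x : ℝ) : ℝ :=
  (∑ k ∈ Finset.Icc 1 (⌈x⌉₊ - 1), 1 / (2 * (k : ℝ) - 1)) +
    (x - ⌈x⌉₊ + 1) / (2 * (⌈x⌉₊ : ℝ) - 1)

abbrev Reach := Relation.ReflTransGen JeepStep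

lemma step_drive (p t : ℝ) (D : ℝ →₀ ℝ) (p' t' : ℝ)
    (heq : t' = t - |p' - p|) (h0 : 0 ≤ t') :
    JeepStep ⟨p, t, D⟩ ⟨p', t', D⟩ := by
  subst heq
  exact JeepStep.drive ⟨p, t, D⟩ p' h0

lemma step_transfer (p t : ℝ) (D : ℝ →₀ ℝ) (t' : ℝ) (D' : ℝ →₀ ℝ)
    (hcons : t' + D' p = t + D p) (ht0 : 0 ≤ t') (ht1 : t' ≤ 1)
    (hD : ∀ q, 0 ≤ D' q) (heq : ∀ q, q ≠ p → D' q = D q) :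
    JeepStep ⟨p, t, D⟩ ⟨p, t', D'⟩ :=
  JeepStep.transfer ⟨p, t, D⟩ t' D' hcons ht0 ht1 hD heq

lemma trip_mid (p l c d : ℝ) (hl0 : 0 < l) (hl : 2 * l ≤ 1)
    (hc : 1 ≤ c) (hd : 0 ≤ d) :
    Reach ⟨p, 0, Finsupp.single p c + Finsupp.single (p + l) d⟩
          ⟨p, 0, Finsupp.single p (c - 1) + Finsupp.single (p + l) (d + (1 - 2 * l))⟩ := by
  have hpq : p ≠ p + l := by linarith [hl0]
  have s1 : JeepStep ⟨p, 0, Finsupp.single p c + Finsupp.single (p + l) d⟩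
      ⟨p, 1, Finsupp.single p (c - 1) + Finsupp.single (p + l) d⟩ := by
    apply step_transfer
    · simp [Finsupp.single_apply, hpq]
    · norm_num
    · norm_num
    · intro r; simp only [Finsupp.add_apply, Finsupp.single_apply]
      split_ifs <;> linarith
    · intro r hr
      simp [Finsupp.single_apply, Ne.symm hr]
  have s2 : JeepStep ⟨p, 1, Finsupp.single p (c - 1) + Finsupp.single (p + l) d⟩
      ⟨p + l, 1 - l, Finsupp.single p (c - 1) + Finsupp.single (p + l) d⟩ := by
    apply step_drive
    · rw [show p + l - p = l by ring, abs_of_pos hl0]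
    · linarith
  have s3 : JeepStep ⟨p + l, 1 - l, Finsupp.single p (c - 1) + Finsupp.single (p + l) d⟩
      ⟨p + l, l, Finsupp.single p (c - 1) + Finsupp.single (p + l) (d + (1 - 2 * l))⟩ := by
    apply step_transfer
    · simp [Finsupp.single_apply, hpq, Ne.symm hpq]; ring
    · linarith
    · linarith
    · intro r; simp only [Finsupp.add_apply, Finsupp.single_apply]
      split_ifs <;> linarith
    · intro r hr
      simp [Finsupp.single_apply, Ne.symm hr]
  have s4 : JeepStep ⟨p + l, l, Finsupp.single p (c - 1) + Finsupp.single (p + l) (d + (1 - 2 * l))⟩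
      ⟨p, 0, Finsupp.single p (c - 1) + Finsupp.single (p + l) (d + (1 - 2 * l))⟩ := by
    apply step_drive
    · rw [show p - (p + l) = -l by ring, abs_neg, abs_of_pos hl0]; ring
    · exact le_refl 0
  exact (((Relation.ReflTransGen.single s1).tail s2).tail s3).tail s4

lemma trip_last (p l c d : ℝ) (hl0 : 0 < l) (hlc : l ≤ c) (hc1 : c ≤ 1) (hd : 0 ≤ d) :
    Reach ⟨p, 0, Finsupp.single p c + Finsupp.single (p + l) d⟩
          ⟨p + l, 0, Finsupp.single (p + l) (d + c - l)⟩ := by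
  have hpq : p ≠ p + l := by linarith [hl0]
  have s1 : JeepStep ⟨p, 0, Finsupp.single p c + Finsupp.single (p + l) d⟩
      ⟨p, c, Finsupp.single (p + l) d⟩ := by
    apply step_transfer
    · simp [Finsupp.single_apply, hpq]
    · linarith
    · exact hc1
    · intro r; simp only [Finsupp.single_apply]; split_ifs <;> linarith
    · intro r hr
      simp [Finsupp.single_apply, Ne.symm hr]
  have s2 : JeepStep ⟨p, c, Finsupp.single (p + l) d⟩
      ⟨p + l, c - l, Finsupp.single (p + l) d⟩ := by
    apply step_drive
    · rw [show p + l - p = l by ring, abs_of_pos hl0]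
    · linarith
  have s3 : JeepStep ⟨p + l, c - l, Finsupp.single (p + l) d⟩
      ⟨p + l, 0, Finsupp.single (p + l) (d + c - l)⟩ := by
    apply step_transfer
    · simp [Finsupp.single_apply]; ring
    · norm_num
    · norm_num
    · intro r; simp only [Finsupp.single_apply]; split_ifs <;> linarith
    · intro r hr
      simp [Finsupp.single_apply, Ne.symm hr]
  exact ((Relation.ReflTransGen.single s1).tail s2).tail s3


lemma trips (p l a : ℝ) (hl0 : 0 < l) (hl : 2 * l ≤ 1) :
    ∀ i : ℕ, (i : ℝ) ≤ a →
    Reach ⟨p, 0, Finsupp.single p a + Finsupp.single (p + l) 0⟩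
          ⟨p, 0, Finsupp.single p (a - i) + Finsupp.single (p + l) (i * (1 - 2 * l))⟩ := by
  intro i
  induction i with
  | zero => intro _; norm_num; exact Relation.ReflTransGen.refl
  | succ m ih =>
    intro h
    have hm : (m : ℝ) ≤ a := by push_cast at h ⊢; linarith
    refine (ih hm).trans ?_
    have := trip_mid p l (a - m) ((m : ℝ) * (1 - 2 * l)) hl0 hl
      (by push_cast at h ⊢; linarith)
      (by have : (0:ℝ) ≤ (m:ℝ) := by positivity
          nlinarith)
    convert this using 3 <;> push_cast <;> ring

lemma F_one (a : ℝ) (h : ⌈a⌉₊ = 1) : F a = a := by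
  norm_num [F, h]

lemma F_succ (m : ℕ) (a : ℝ) (h : ⌈a⌉₊ = m + 2) :
    F a = F ((m + 1 : ℕ) : ℝ) + (a - (m + 2 : ℕ) + 1) / (2 * ((m + 2 : ℕ) : ℝ) - 1) := by
  unfold F
  rw [h, Nat.ceil_natCast]
  rw [show m + 2 - 1 = m + 1 by omega, show m + 1 - 1 = m by omega]
  rw [Finset.sum_Icc_succ_top (by omega : 1 ≤ m + 1)]
  push_cast
  ring

lemma main_lemma : ∀ n : ℕ, ∀ a p : ℝ, 1 ≤ a → ⌈a⌉₊ = n + 1 →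
    ∃ s : JeepState, Reach ⟨p, 0, Finsupp.single p a⟩ s ∧ s.pos = p + F a := by
  intro n
  induction n with
  | zero =>
    intro a p h1 hc
    have ha1 : a ≤ 1 := by
      have := (Nat.ceil_le (α := ℝ)).1 (le_of_eq hc)
      simpa using this
    refine ⟨⟨p + a, 0, Finsupp.single (p + a) (0 + a - a)⟩, ?_, ?_⟩
    · have := trip_last p a a 0 (by linarith) le_rfl ha1 le_rfl
      convert this using 3
      simp
    · simp [F_one a hc]
  | succ m ih =>
    intro a p h1 hc
    obtain ⟨l, hldef⟩ : ∃ l : ℝ, l = (a - ((m:ℝ) + 2) + 1) / (2 * ((m:ℝ) + 2) - 1) := ⟨_, rfl⟩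
    have hm0 : (0:ℝ) ≤ (m:ℝ) := Nat.cast_nonneg m
    have hma : ((m : ℝ) + 1) < a := by
      have := (Nat.lt_ceil (n := m + 1) (a := a)).1 (by omega)
      push_cast at this; linarith
    have ham : a ≤ (m : ℝ) + 2 := by
      have := (Nat.ceil_le (α := ℝ)).1 (le_of_eq hc)
      push_cast at this; linarith
    have hden : (0:ℝ) < 2 * ((m:ℝ) + 2) - 1 := by linarith
    have hl0 : 0 < l := by
      rw [hldef]; apply div_pos <;> linarith
    have hlmul : l * (2 * ((m:ℝ) + 2) - 1) = a - ((m:ℝ) + 2) + 1 := by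
      rw [hldef]; field_simp
    have hl : 2 * l ≤ 1 := by nlinarith
    -- m+1 intermediate trips
    have t1 := trips p l a hl0 hl (m + 1) (by push_cast; linarith)
    -- final trip
    have hlc : l ≤ a - ((m + 1 : ℕ) : ℝ) := by push_cast; nlinarith
    have t2 := trip_last p l (a - ((m + 1 : ℕ) : ℝ)) (((m + 1 : ℕ) : ℝ) * (1 - 2 * l)) hl0 hlc
      (by push_cast; linarith)
      (by have h2l : (0:ℝ) ≤ 1 - 2 * l := by linarith
          positivity)
    -- depot value after final trip is m + 1
    have hval : ((m + 1 : ℕ) : ℝ) * (1 - 2 * l) + (a - ((m + 1 : ℕ) : ℝ)) - l = ((m:ℝ) + 1) := by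
      push_cast
      nlinarith [hlmul]
    rw [hval] at t2
    -- inductive step from p + l with m+1 tankloads
    obtain ⟨s, hs, hpos⟩ := ih ((m : ℝ) + 1) (p + l) (by linarith)
      (by rw [show ((m:ℝ) + 1) = ((m + 1 : ℕ) : ℝ) by push_cast; ring, Nat.ceil_natCast])
    refine ⟨s, ?_, ?_⟩
    · have start : Reach ⟨p, 0, Finsupp.single p a⟩
          ⟨p, 0, Finsupp.single p a + Finsupp.single (p + l) 0⟩ := by
        rw [Finsupp.single_zero, add_zero]
      exact ((start.trans t1).trans t2).trans hs
    · rw [hpos, F_succ m a hc, hldef]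
      push_cast
      ring


/-- For every `x ≥ 1` there is a plan with `x` tankloads that reaches a state
in which the jeep's position equals `F x`. -/
theorem jeep_oneway_reachable (x : ℝ) (hx : 1 ≤ x) :
    ∃ s : JeepState,
      Relation.ReflTransGen JeepStep (jeepInit x) s ∧ s.pos = F x := by
  obtain ⟨n, hn⟩ : ∃ n, ⌈x⌉₊ = n + 1 :=
    ⟨⌈x⌉₊ - 1, by have := Nat.one_le_ceil_iff.2 (show (0:ℝ) < x by linarith); omega⟩
  obtain ⟨s, hs, hpos⟩ := main_lemma n x 0 hx hn
  exact ⟨s, hs, by rw [hpos]; ring⟩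
end

section
/- For every real number x ≥ 1 and every plan with x tankloads in the single-jeep model, every state reached by the plan has jeep position at most F(x); that is, a single jeep with x tankloads of fuel at the desert border cannot get farther than F(x) into the desert. -/
/-!
Record the plan's drives as segments. For `y > 0` let `g y` be the fuel burnt beyond `y`.
Fuel beyond `y` (burnt, in depots or in the tank) can only have been carried across `y` by
rightward crossings, at most one tankload each, so `g y` is at most the number `R y` of rightward
crossings. For `y ≤ pos` rightward crossings outnumber leftward ones by one, so `y` is crossed
`2 R y - 1 ≥ 2 ⌈g y⌉ - 1` times. Since `-g'` is the number of crossings, `g` decreases at rate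
at least `2k + 1` while it exceeds `k`; comparing with the solution of that differential
inequality started at `g 0 ≤ x` shows that `g` reaches `0` within distance `F x`.
-/

open Set MeasureTheory
open scoped ENNReal Interval

noncomputable def oddHarmonic (k : ℕ) : ℝ := ∑ j ∈ Finset.Icc 1 k, 1 / (2 * (j : ℝ) - 1)

theorem oddHarmonic_nonneg (k : ℕ) : 0 ≤ oddHarmonic k :=
  Finset.sum_nonneg fun j hj => by
    have : (1 : ℝ) ≤ j := by exact_mod_cast (Finset.mem_Icc.1 hj).1
    exact one_div_nonneg.2 (by linarith)

theorem oddHarmonic_succ (k : ℕ) : oddHarmonic (k + 1) = oddHarmonic k + 1 / (2 * k + 1) := by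
  rw [oddHarmonic, Finset.sum_Icc_succ_top (by omega), ← oddHarmonic]
  push_cast
  ring

theorem F_eq_of_mem_Ioc {k : ℕ} {u : ℝ} (hu : u ∈ Ioc (k : ℝ) (k + 1)) :
    F u = oddHarmonic k + (u - k) / (2 * k + 1) := by
  have hceil : ⌈u⌉₊ = k + 1 := by
    rw [Nat.ceil_eq_iff k.succ_ne_zero]
    push_cast
    simpa using hu
  rw [F, hceil, Nat.add_sub_cancel, ← oddHarmonic]
  push_cast
  ring_nf

theorem F_natCast_succ (k : ℕ) : F (k + 1) = oddHarmonic (k + 1) := by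
  rw [F_eq_of_mem_Ioc ⟨by linarith, le_rfl⟩, oddHarmonic_succ]
  ring

theorem F_nonneg {u : ℝ} (hu : 0 < u) : 0 ≤ F u := by
  have hceil : (1 : ℝ) ≤ ⌈u⌉₊ := by exact_mod_cast Nat.one_le_ceil_iff.2 hu
  have : (⌈u⌉₊ : ℝ) < u + 1 := Nat.ceil_lt_add_one hu.le
  rw [F, ← oddHarmonic]
  exact add_nonneg (oddHarmonic_nonneg _) (div_nonneg (by linarith) (by linarith))

/-- `F u` is the distance covered before reaching `0` by a solution of `g' = -(2⌈g⌉ - 1)` started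
at `g = u`. -/
theorem sub_le_F_of_descent {g : ℝ → ℝ} {a b : ℝ} (hg : ContinuousOn g (Icc a b)) (hgb : 0 ≤ g b)
    (hstep : ∀ y w, a ≤ y → y ≤ w → w ≤ b → w - y ≤ g y - g w)
    (hrate : ∀ (k : ℕ) y w, a ≤ y → y ≤ w → w ≤ b → (∀ v ∈ Ioo y w, (k : ℝ) < g v) →
      (2 * k + 1) * (w - y) ≤ g y - g w)
    {y u : ℝ} (hy : y ∈ Icc a b) (hu : 0 < u) (hgu : g y ≤ u) : b - y ≤ F u := by
  suffices ∀ k : ℕ, ∀ y ∈ Icc a b, ∀ u ∈ Ioc 0 ((k : ℝ) + 1), g y ≤ u → b - y ≤ F u from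
    this ⌈u⌉₊ y hy u ⟨hu, (Nat.le_ceil u).trans (by linarith)⟩ hgu
  intro k
  induction k with
  | zero =>
    rintro y ⟨hay, hyb⟩ u ⟨hu, hu1⟩ hgu
    have hFu : F u = u := by
      simpa [oddHarmonic] using F_eq_of_mem_Ioc (k := 0) ⟨by simpa using hu, by simpa using hu1⟩
    linarith [hstep y b hay hyb le_rfl]
  | succ k ih =>
    rintro y ⟨hay, hyb⟩ u ⟨hu, hu1⟩ hgu
    rcases le_or_gt u (k + 1) with hle | hlt
    · exact ih y ⟨hay, hyb⟩ u ⟨hu, hle⟩ hgu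
    set K : ℕ := k + 1 with hK
    have hKpos : (0 : ℝ) < K := by positivity
    have hK_le : (K : ℝ) ≤ k + 1 := by simp [hK]
    have hFK : F K = oddHarmonic K := by simpa [hK] using F_natCast_succ k
    rw [F_eq_of_mem_Ioc (k := K) ⟨by simpa [hK] using hlt, by push_cast [hK] at hu1 ⊢; linarith⟩]
    have hdiv : 0 ≤ (u - K) / (2 * K + 1) := div_nonneg (by simp [hK]; linarith) (by positivity)
    rcases le_or_gt (g y) K with hgyK | hKgy
    · have := ih y ⟨hay, hyb⟩ K ⟨hKpos, hK_le⟩ hgyK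
      linarith
    -- the first point `z` beyond `y` where `g` has come down to `K`, or `b`
    obtain ⟨z, ⟨hyz, hzb⟩, hKz, hbz⟩ : ∃ z ∈ Icc y b, (K : ℝ) ≤ g z ∧ b - z ≤ oddHarmonic K := by
      rcases le_or_gt (g b) K with hgbK | hKgb
      · obtain ⟨z, hz, hgz⟩ := intermediate_value_Icc' hyb (hg.mono (Icc_subset_Icc hay le_rfl))
          ⟨hgbK, hKgy.le⟩
        refine ⟨z, hz, hgz.ge, ?_⟩
        rw [← hFK, ← hgz]
        exact ih z ⟨hay.trans hz.1, hz.2⟩ _ ⟨hgz ▸ hKpos, hgz ▸ hK_le⟩ le_rfl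
      · exact ⟨b, ⟨hyb, le_rfl⟩, hKgb.le, by simpa using oddHarmonic_nonneg K⟩
    have hzy := hrate K y z hay hyz hzb fun v hv => by
      linarith [hstep v z (hay.trans hv.1.le) hv.2.le hzb, hv.2]
    have : z - y ≤ (u - K) / (2 * K + 1) := by
      rw [le_div_iff₀ (by positivity)]
      linarith
    linarith

/-- All fuel of a state, the tank counted as a depot at the jeep's position: transfers leave it
unchanged. -/
noncomputable def JeepState.fuel (s : JeepState) : ℝ →₀ ℝ := s.depot + Finsupp.single s.pos s.tank

namespace Jeep

/-- A drive `d` goes from `d.1` to `d.2`; `lengthAbove y d` is the fuel it burns beyond `y`. -/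
noncomputable def lengthAbove (y : ℝ) (d : ℝ × ℝ) : ℝ := max (max d.1 d.2) y - max (min d.1 d.2) y

theorem lengthAbove_nonneg (y : ℝ) (d : ℝ × ℝ) : 0 ≤ lengthAbove y d :=
  sub_nonneg.2 (max_le_max_right y min_le_max)

theorem lengthAbove_le_abs (y : ℝ) (d : ℝ × ℝ) : lengthAbove y d ≤ |d.2 - d.1| := by
  rw [abs_sub_comm, ← max_sub_min_eq_abs, lengthAbove]
  simp only [max_def, min_def]
  split_ifs <;> linarith

theorem lengthAbove_anti (d : ℝ × ℝ) : Antitone fun y => lengthAbove y d := by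
  intro y w hyw
  simp only [lengthAbove, max_def, min_def]
  split_ifs <;> linarith

theorem continuous_lengthAbove (d : ℝ × ℝ) : Continuous fun y => lengthAbove y d := by
  unfold lengthAbove
  fun_prop

theorem ofReal_lengthAbove_sub (d : ℝ × ℝ) {y w : ℝ} (hyw : y ≤ w) :
    ENNReal.ofReal (lengthAbove y d - lengthAbove w d) = volume (Ι d.1 d.2 ∩ Ioc y w) := by
  rw [uIoc, Ioc_inter_Ioc, Real.volume_Ioc]
  rcases le_total (min (max d.1 d.2) w) (max (min d.1 d.2) y) with h | h
  · rw [ENNReal.ofReal_of_nonpos (sub_nonpos.2 h), ENNReal.ofReal_eq_zero]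
    revert h
    simp only [lengthAbove, max_def, min_def]
    split_ifs <;> intro h <;> linarith
  · congr 1
    revert h
    simp only [lengthAbove, max_def, min_def]
    split_ifs <;> intro h <;> linarith


noncomputable def burnedAbove (y : ℝ) (l : List (ℝ × ℝ)) : ℝ := (l.map (lengthAbove y)).sum

noncomputable def crossings (v : ℝ) (l : List (ℝ × ℝ)) : ℕ :=
  l.countP fun d => min d.1 d.2 < v ∧ v ≤ max d.1 d.2

noncomputable def rightCrossings (v : ℝ) (l : List (ℝ × ℝ)) : ℕ :=
  l.countP fun d => d.1 < v ∧ v ≤ d.2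

theorem burnedAbove_nonneg (y : ℝ) (l : List (ℝ × ℝ)) : 0 ≤ burnedAbove y l :=
  List.sum_nonneg fun _ h => by
    obtain ⟨d, -, rfl⟩ := List.mem_map.1 h
    exact lengthAbove_nonneg y d

theorem burnedAbove_anti (l : List (ℝ × ℝ)) : Antitone fun y => burnedAbove y l :=
  fun _ _ hyw => List.sum_le_sum fun d _ => lengthAbove_anti d hyw

theorem continuous_burnedAbove (l : List (ℝ × ℝ)) : Continuous fun y => burnedAbove y l :=
  continuous_list_sum l fun d _ => continuous_lengthAbove d

theorem lintegral_crossings (l : List (ℝ × ℝ)) {y w : ℝ} (hyw : y ≤ w) :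
    ∫⁻ v in Ioc y w, (crossings v l : ℝ≥0∞) =
      ENNReal.ofReal (burnedAbove y l - burnedAbove w l) := by
  induction l with
  | nil => simp [crossings, burnedAbove]
  | cons d l ih =>
    have hcount : ∀ v, (crossings v (d :: l) : ℝ≥0∞) =
        crossings v l + (Ι d.1 d.2).indicator 1 v := by
      intro v
      simp only [crossings, List.countP_cons, indicator, uIoc, mem_Ioc, decide_eq_true_eq]
      split_ifs <;> simp
    have hsplit : burnedAbove y (d :: l) - burnedAbove w (d :: l) =
        (burnedAbove y l - burnedAbove w l) + (lengthAbove y d - lengthAbove w d) := by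
      simp only [burnedAbove, List.map_cons, List.sum_cons]
      ring
    simp_rw [hcount]
    rw [lintegral_add_right _ (measurable_one.indicator measurableSet_uIoc), ih,
      lintegral_indicator_one measurableSet_uIoc, Measure.restrict_apply measurableSet_uIoc,
      hsplit, ENNReal.ofReal_add (sub_nonneg.2 (burnedAbove_anti l hyw))
        (sub_nonneg.2 (lengthAbove_anti d hyw)), ofReal_lengthAbove_sub d hyw]

theorem natCast_mul_sub_le_burnedAbove_sub (l : List (ℝ × ℝ)) {y w : ℝ} (hyw : y ≤ w) {m : ℕ}
    (hm : ∀ v ∈ Ioo y w, m ≤ crossings v l) :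
    m * (w - y) ≤ burnedAbove y l - burnedAbove w l := by
  rw [← ENNReal.ofReal_le_ofReal_iff (sub_nonneg.2 (burnedAbove_anti l hyw)),
    ← lintegral_crossings l hyw, ENNReal.ofReal_mul (Nat.cast_nonneg m), ENNReal.ofReal_natCast,
    ← Real.volume_Ioo, ← setLIntegral_const, ← setLIntegral_congr Ioo_ae_eq_Ioc]
  exact setLIntegral_mono' measurableSet_Ioo fun v hv => by exact_mod_cast hm v hv


noncomputable def fuelAbove (y : ℝ) (f : ℝ →₀ ℝ) : ℝ := f.sum fun q r => if y ≤ q then r else 0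

noncomputable def totalFuel (f : ℝ →₀ ℝ) : ℝ := f.sum fun _ r => r

theorem fuelAbove_add_single (y : ℝ) (f : ℝ →₀ ℝ) (p t : ℝ) :
    fuelAbove y (f + Finsupp.single p t) = fuelAbove y f + if y ≤ p then t else 0 := by
  rw [fuelAbove, Finsupp.sum_add_index' (fun _ => by simp) fun _ _ _ => by split_ifs <;> simp,
    Finsupp.sum_single_index (by simp)]
  rfl

theorem totalFuel_add_single (f : ℝ →₀ ℝ) (p t : ℝ) :
    totalFuel (f + Finsupp.single p t) = totalFuel f + t := by
  rw [totalFuel, Finsupp.sum_add_index' (fun _ => rfl) fun _ _ _ => rfl,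
    Finsupp.sum_single_index rfl]
  rfl

theorem fuelAbove_nonneg (y : ℝ) {f : ℝ →₀ ℝ} (hf : ∀ q, 0 ≤ f q) : 0 ≤ fuelAbove y f :=
  Finsupp.sum_nonneg fun q _ => by split_ifs <;> simp [hf q]

theorem totalFuel_nonneg {f : ℝ →₀ ℝ} (hf : ∀ q, 0 ≤ f q) : 0 ≤ totalFuel f :=
  Finsupp.sum_nonneg fun q _ => hf q


theorem drive_tank_add_lengthAbove_le {a c y t : ℝ} (hd : |c - a| ≤ t) (ht : t ≤ 1) :
    (if y ≤ c then t - |c - a| else 0) + lengthAbove y (a, c) ≤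
      (if y ≤ a then t else 0) + (if a < y ∧ y ≤ c then 1 else 0) := by
  rw [abs_eq_max_neg] at *
  simp only [ite_and, lengthAbove, max_def, min_def] at *
  split_ifs at * <;> linarith

theorem drive_crossings_add (a c y : ℝ) :
    (if min a c < y ∧ y ≤ max a c then 1 else 0) + (if y ≤ c then 1 else 0) =
      (if y ≤ a then 1 else 0) + 2 * (if a < y ∧ y ≤ c then 1 else 0) := by
  simp only [ite_and, max_def, min_def]
  split_ifs <;> first | rfl | (exfalso; linarith)


/-- Bookkeeping for a plan with `x` tankloads that has reached `s` by the drives `l`. -/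
structure Ledger (x : ℝ) (s : JeepState) (l : List (ℝ × ℝ)) : Prop where
  tank_nonneg : 0 ≤ s.tank
  tank_le_one : s.tank ≤ 1
  depot_nonneg : ∀ q, 0 ≤ s.depot q
  burnedAbove_add_totalFuel_le : ∀ y, burnedAbove y l + totalFuel s.fuel ≤ x
  fuelAbove_add_burnedAbove_le :
    ∀ y, 0 < y → fuelAbove y s.fuel + burnedAbove y l ≤ rightCrossings y l
  crossings_add : ∀ y, 0 < y →
    crossings y l + (if y ≤ s.pos then 1 else 0) = 2 * rightCrossings y l

namespace Ledger

variable {x : ℝ} {s : JeepState} {l : List (ℝ × ℝ)}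

theorem init (hx : 0 ≤ x) : Ledger x (jeepInit x) [] where
  tank_nonneg := le_rfl
  tank_le_one := zero_le_one
  depot_nonneg q := by
    simp only [jeepInit, Finsupp.single_apply]
    split_ifs <;> simp [hx]
  burnedAbove_add_totalFuel_le y := by
    simp [burnedAbove, totalFuel, JeepState.fuel, jeepInit]
  fuelAbove_add_burnedAbove_le y hy := by
    simp [burnedAbove, fuelAbove, JeepState.fuel, jeepInit, rightCrossings, hy.not_ge]
  crossings_add y hy := by
    simp [crossings, rightCrossings, jeepInit, hy.not_ge]

theorem drive (h : Ledger x s l) {p : ℝ} (hd : 0 ≤ s.tank - |p - s.pos|) :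
    Ledger x ⟨p, s.tank - |p - s.pos|, s.depot⟩ ((s.pos, p) :: l) where
  tank_nonneg := hd
  tank_le_one := by linarith [h.tank_le_one, abs_nonneg (p - s.pos)]
  depot_nonneg := h.depot_nonneg
  burnedAbove_add_totalFuel_le y := by
    have := h.burnedAbove_add_totalFuel_le y
    have := lengthAbove_le_abs y (s.pos, p)
    simp only [burnedAbove, JeepState.fuel, totalFuel_add_single, List.map_cons,
      List.sum_cons] at *
    linarith
  fuelAbove_add_burnedAbove_le y hy := by
    have := h.fuelAbove_add_burnedAbove_le y hy
    have := drive_tank_add_lengthAbove_le (y := y) (sub_nonneg.1 hd) h.tank_le_one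
    simp only [burnedAbove, rightCrossings, JeepState.fuel, fuelAbove_add_single, List.map_cons,
      List.sum_cons, List.countP_cons, decide_eq_true_eq] at *
    push_cast [Nat.cast_ite] at *
    linarith
  crossings_add y hy := by
    have := h.crossings_add y hy
    have := drive_crossings_add s.pos p y
    simp only [crossings, rightCrossings, List.countP_cons, decide_eq_true_eq] at *
    omega

theorem transfer (h : Ledger x s l) {t : ℝ} {D : ℝ →₀ ℝ}
    (hcons : t + D s.pos = s.tank + s.depot s.pos) (ht0 : 0 ≤ t) (ht1 : t ≤ 1)
    (hD : ∀ q, 0 ≤ D q) (heq : ∀ q, q ≠ s.pos → D q = s.depot q) :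
    Ledger x ⟨s.pos, t, D⟩ l := by
  have hfuel : JeepState.fuel ⟨s.pos, t, D⟩ = s.fuel := by
    ext q
    simp only [JeepState.fuel, Finsupp.add_apply, Finsupp.single_apply]
    split_ifs with hq
    · subst hq; linarith
    · simpa using heq q (Ne.symm hq)
  exact ⟨ht0, ht1, hD, hfuel ▸ h.burnedAbove_add_totalFuel_le,
    hfuel ▸ h.fuelAbove_add_burnedAbove_le, h.crossings_add⟩

theorem of_reachable (hx : 0 ≤ x) (hs : Relation.ReflTransGen JeepStep (jeepInit x) s) :
    ∃ l, Ledger x s l := by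
  induction hs with
  | refl => exact ⟨[], init hx⟩
  | tail _ hstep ih =>
    obtain ⟨l, hl⟩ := ih
    cases hstep with
    | drive p hd => exact ⟨_, hl.drive hd⟩
    | transfer t D hcons ht0 ht1 hD heq => exact ⟨l, hl.transfer hcons ht0 ht1 hD heq⟩

theorem fuel_nonneg (h : Ledger x s l) (q : ℝ) : 0 ≤ s.fuel q := by
  simp only [JeepState.fuel, Finsupp.add_apply, Finsupp.single_apply]
  split_ifs <;> linarith [h.depot_nonneg q, h.tank_nonneg]

theorem one_le_crossings (h : Ledger x s l) {v : ℝ} (hv : 0 < v) (hvp : v ≤ s.pos) :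
    1 ≤ crossings v l := by
  have := h.crossings_add v hv
  rw [if_pos hvp] at this
  omega

theorem two_mul_add_one_le_crossings (h : Ledger x s l) {v : ℝ} (hv : 0 < v) (hvp : v ≤ s.pos)
    {k : ℕ} (hk : (k : ℝ) < burnedAbove v l) : 2 * k + 1 ≤ crossings v l := by
  have hright : k < rightCrossings v l := by
    have := h.fuelAbove_add_burnedAbove_le v hv
    have := fuelAbove_nonneg v h.fuel_nonneg
    exact_mod_cast (show (k : ℝ) < rightCrossings v l by linarith)
  have := h.crossings_add v hv
  rw [if_pos hvp] at this
  omega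

theorem pos_le_F (h : Ledger x s l) (hx : 0 < x) : s.pos ≤ F x := by
  rcases le_or_gt s.pos 0 with hp | hp
  · exact hp.trans (F_nonneg hx)
  have hburned : burnedAbove 0 l ≤ x := by
    linarith [h.burnedAbove_add_totalFuel_le 0, totalFuel_nonneg h.fuel_nonneg]
  have := sub_le_F_of_descent (g := fun y => burnedAbove y l)
    (continuous_burnedAbove l).continuousOn (burnedAbove_nonneg _ _)
    (fun y w hy hyw hw => by
      simpa using natCast_mul_sub_le_burnedAbove_sub l hyw (m := 1) fun v hv =>
        h.one_le_crossings (hy.trans_lt hv.1) (hv.2.le.trans hw))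
    (fun k y w hy hyw hw hk => by
      exact_mod_cast natCast_mul_sub_le_burnedAbove_sub l hyw (m := 2 * k + 1) fun v hv =>
        h.two_mul_add_one_le_crossings (hy.trans_lt hv.1) (hv.2.le.trans hw) (hk v hv))
    ⟨le_rfl, hp.le⟩ hx hburned
  linarith

end Ledger

end Jeep

/-- For every `x ≥ 1`, every state reached by a plan with `x` tankloads has
jeep position at most `F x`. -/
theorem jeep_oneway_bound (x : ℝ) (hx : 1 ≤ x) (s : JeepState)
    (hs : Relation.ReflTransGen JeepStep (jeepInit x) s) :
    s.pos ≤ F x := by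
  obtain ⟨l, hl⟩ := Jeep.Ledger.of_reachable (by linarith) hs
  exact hl.pos_le_F (by linarith)
end

section
/- Let n ≥ 1 and x ≥ n be integers. In the multi-jeep model with n designated crossing jeeps and x − n helper jeeps, none of which is required to return, there is a plan with x tankloads after which each of the n designated jeeps has reached position 1 + Σ_{j=n+1}^{x} 1/j. -/
/-- A state of the multi-jeep model with `N` jeeps: each jeep's position and
tank content, and a finitely supported function recording the fuel stored in
depots. -/
structure MultiState (N : ℕ) where
  pos : Fin N → ℝ
  tank : Fin N → ℝ
  depot : ℝ →₀ ℝ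

/-- Admissible moves of the multi-jeep model: one jeep drives (consuming one
tankload of fuel per unit of distance), or fuel is moved between the tank of a
jeep and the depot at its position, or between the tanks of two jeeps at the
same position; tank contents stay in `[0,1]` and depots stay nonnegative. -/
inductive MultiStep {N : ℕ} : MultiState N → MultiState N → Prop
  | drive (s : MultiState N) (i : Fin N) (p' : ℝ)
      (h : 0 ≤ s.tank i - |p' - s.pos i|) :
      MultiStep s ⟨Function.update s.pos i p',
        Function.update s.tank i (s.tank i - |p' - s.pos i|), s.depot⟩
  | transferDepot (s : MultiState N) (i : Fin N) (t' : ℝ) (D' : ℝ →₀ ℝ)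
      (hcons : t' + D' (s.pos i) = s.tank i + s.depot (s.pos i))
      (ht0 : 0 ≤ t') (ht1 : t' ≤ 1)
      (hD : ∀ q, 0 ≤ D' q)
      (heq : ∀ q, q ≠ s.pos i → D' q = s.depot q) :
      MultiStep s ⟨s.pos, Function.update s.tank i t', D'⟩
  | transferJeep (s : MultiState N) (i j : Fin N) (hij : i ≠ j)
      (hpos : s.pos i = s.pos j) (ti' tj' : ℝ)
      (hcons : ti' + tj' = s.tank i + s.tank j)
      (hi0 : 0 ≤ ti') (hi1 : ti' ≤ 1) (hj0 : 0 ≤ tj') (hj1 : tj' ≤ 1) :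
      MultiStep s ⟨s.pos,
        Function.update (Function.update s.tank i ti') j tj', s.depot⟩

/-- The initial state of a plan with `x` tankloads: all jeeps at position `0`
with empty tanks, and `x` tankloads of fuel at position `0`. -/
noncomputable def multiInit (N : ℕ) (x : ℝ) : MultiState N :=
  ⟨fun _ => 0, fun _ => 0, Finsupp.single 0 x⟩

lemma MultiState.ext' {N : ℕ} {s t : MultiState N}
    (h1 : s.pos = t.pos) (h2 : s.tank = t.tank) (h3 : s.depot = t.depot) : s = t := by
  cases s; cases t; simp_all

/-- Reachability in the multi-jeep model. -/
abbrev MultiReach {N : ℕ} : MultiState N → MultiState N → Prop :=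
  Relation.ReflTransGen MultiStep

lemma multiReach_to_plan {N : ℕ} {a b : MultiState N} (h : MultiReach a b) :
    ∃ (k : ℕ) (f : ℕ → MultiState N), f 0 = a ∧
      (∀ j < k, MultiStep (f j) (f (j + 1))) ∧ f k = b := by
  induction h with
  | refl => exact ⟨0, fun _ => a, rfl, by omega, rfl⟩
  | @tail b c _ hstep ih =>
    obtain ⟨k, f, h0, hs, hk⟩ := ih
    refine ⟨k + 1, fun j => if j ≤ k then f j else c, by simp [h0], ?_, by simp⟩
    intro j hj
    rcases lt_or_eq_of_le (Nat.lt_succ_iff.mp hj) with hlt | heq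
    · simp only [if_pos (Nat.le_of_lt hlt), if_pos (Nat.succ_le_of_lt hlt)]
      exact hs j hlt
    · subst heq
      simp only [le_refl, if_pos, if_neg (by omega : ¬ j + 1 ≤ j)]
      exact hk ▸ hstep

/-- From the initial state, all `N` jeeps fill their tanks from the depot. -/
lemma multi_refuel (N x : ℕ) (hNx : N ≤ x) :
    MultiReach (multiInit N (x : ℝ))
      ⟨fun _ => 0, fun _ => 1, Finsupp.single 0 ((x : ℝ) - (N : ℝ))⟩ := by
  suffices H : ∀ r ≤ N, MultiReach (multiInit N (x : ℝ))
      ⟨fun _ => 0, fun i => if (i : ℕ) < r then 1 else 0,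
        Finsupp.single 0 ((x : ℝ) - (r : ℝ))⟩ by
    have h := H N le_rfl
    have he : (⟨fun _ => 0, fun i => if (i : ℕ) < N then 1 else 0,
        Finsupp.single 0 ((x : ℝ) - (N : ℝ))⟩ : MultiState N)
        = ⟨fun _ => 0, fun _ => 1, Finsupp.single 0 ((x : ℝ) - (N : ℝ))⟩ := by
      refine MultiState.ext' rfl ?_ rfl
      funext i
      show (if (i : ℕ) < N then (1:ℝ) else 0) = 1
      rw [if_pos i.isLt]
    exact he ▸ h
  intro r hr
  induction r with
  | zero =>
    have he : multiInit N (x : ℝ) = (⟨fun _ => 0, fun i => if (i : ℕ) < 0 then 1 else 0,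
        Finsupp.single 0 ((x : ℝ) - ((0 : ℕ) : ℝ))⟩ : MultiState N) := by
      refine MultiState.ext' rfl ?_ ?_
      · funext i
        show (0 : ℝ) = if (i : ℕ) < 0 then 1 else 0
        rw [if_neg (by omega)]
      · show Finsupp.single 0 (x : ℝ) = Finsupp.single 0 ((x : ℝ) - ((0 : ℕ) : ℝ))
        norm_num
    rw [← he]
  | succ r ih =>
    refine Relation.ReflTransGen.tail (ih (by omega)) ?_
    have hrN : r < N := by omega
    set sr : MultiState N := ⟨fun _ => 0, fun i => if (i : ℕ) < r then 1 else 0,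
        Finsupp.single 0 ((x : ℝ) - (r : ℝ))⟩ with hsr
    have htk : sr.tank ⟨r, hrN⟩ = 0 := by
      show (if r < r then (1:ℝ) else 0) = 0
      rw [if_neg (lt_irrefl r)]
    have hps : sr.pos ⟨r, hrN⟩ = 0 := rfl
    have hstep := MultiStep.transferDepot sr ⟨r, hrN⟩ 1
        (Finsupp.single 0 ((x : ℝ) - ((r + 1 : ℕ) : ℝ)))
        (by
          rw [htk, hps]
          rw [Finsupp.single_eq_same]
          show 1 + ((x : ℝ) - ((r + 1 : ℕ) : ℝ)) = 0 + Finsupp.single (0:ℝ) ((x : ℝ) - (r : ℝ)) 0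
          rw [Finsupp.single_eq_same]
          push_cast
          ring)
        zero_le_one le_rfl
        (by
          intro q
          rw [Finsupp.single_apply]
          split_ifs with h
          · have h2 : ((r + 1 : ℕ) : ℝ) ≤ (x : ℝ) := by
              exact_mod_cast (by omega : r + 1 ≤ x)
            linarith
          · exact le_rfl)
        (by
          intro q hq
          have hq0 : (0 : ℝ) ≠ q := fun h => hq (h ▸ hps.symm)
          show Finsupp.single (0:ℝ) ((x : ℝ) - ((r + 1 : ℕ) : ℝ)) q
              = Finsupp.single (0:ℝ) ((x : ℝ) - (r : ℝ)) q
          rw [Finsupp.single_apply, Finsupp.single_apply, if_neg hq0, if_neg hq0])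
    have he : (⟨sr.pos, Function.update sr.tank ⟨r, hrN⟩ 1,
        Finsupp.single 0 ((x : ℝ) - ((r + 1 : ℕ) : ℝ))⟩ : MultiState N)
        = ⟨fun _ => 0, fun i => if (i : ℕ) < r + 1 then 1 else 0,
        Finsupp.single 0 ((x : ℝ) - ((r + 1 : ℕ) : ℝ))⟩ := by
      refine MultiState.ext' rfl ?_ rfl
      funext i
      show Function.update sr.tank ⟨r, hrN⟩ 1 i = if (i : ℕ) < r + 1 then (1:ℝ) else 0
      rw [Function.update_apply]
      rcases eq_or_ne i ⟨r, hrN⟩ with hi | hi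
      · subst hi
        rw [if_pos rfl, if_pos (Nat.lt_succ_self r)]
      · have hir : (i : ℕ) ≠ r := fun h => hi (Fin.ext h)
        rw [if_neg hi]
        show (if (i : ℕ) < r then (1:ℝ) else 0) = _
        rcases Nat.lt_or_ge (i : ℕ) r with h | h
        · rw [if_pos h, if_pos (by omega)]
        · rw [if_neg (by omega), if_neg (by omega)]
    exact he ▸ hstep

/-- All jeeps with index `< m`, each at position `p` with tank `t`, drive
forward a distance `d`. -/
lemma multi_driveAll {N : ℕ} (s : MultiState N) (m : ℕ) (hm : m ≤ N) (p t d : ℝ)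
    (hd0 : 0 ≤ d) (hdt : d ≤ t)
    (hs : ∀ i : Fin N, (i : ℕ) < m → s.pos i = p ∧ s.tank i = t) :
    MultiReach s ⟨fun i => if (i : ℕ) < m then p + d else s.pos i,
      fun i => if (i : ℕ) < m then t - d else s.tank i, s.depot⟩ := by
  suffices H : ∀ r ≤ m, MultiReach s ⟨fun i => if (i : ℕ) < r then p + d else s.pos i,
      fun i => if (i : ℕ) < r then t - d else s.tank i, s.depot⟩ from H m le_rfl
  intro r hr
  induction r with
  | zero =>
    have he : s = (⟨fun i => if (i : ℕ) < 0 then p + d else s.pos i,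
        fun i => if (i : ℕ) < 0 then t - d else s.tank i, s.depot⟩ : MultiState N) := by
      refine MultiState.ext' ?_ ?_ rfl
      · funext i
        show s.pos i = if (i : ℕ) < 0 then p + d else s.pos i
        rw [if_neg (by omega)]
      · funext i
        show s.tank i = if (i : ℕ) < 0 then t - d else s.tank i
        rw [if_neg (by omega)]
    rw [← he]
  | succ r ih =>
    refine Relation.ReflTransGen.tail (ih (by omega)) ?_
    have hrN : r < N := by omega
    have hrm : r < m := by omega
    set sr : MultiState N := ⟨fun i => if (i : ℕ) < r then p + d else s.pos i,
        fun i => if (i : ℕ) < r then t - d else s.tank i, s.depot⟩ with hsr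
    have hp0 : sr.pos ⟨r, hrN⟩ = p := by
      show (if r < r then p + d else s.pos ⟨r, hrN⟩) = p
      rw [if_neg (lt_irrefl r)]
      exact (hs ⟨r, hrN⟩ hrm).1
    have ht0' : sr.tank ⟨r, hrN⟩ = t := by
      show (if r < r then t - d else s.tank ⟨r, hrN⟩) = t
      rw [if_neg (lt_irrefl r)]
      exact (hs ⟨r, hrN⟩ hrm).2
    have habs : |p + d - sr.pos ⟨r, hrN⟩| = d := by
      rw [hp0, show p + d - p = d from by ring]
      exact abs_of_nonneg hd0
    have hstep := MultiStep.drive sr ⟨r, hrN⟩ (p + d)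
        (by rw [habs, ht0']; linarith)
    have he : (⟨Function.update sr.pos ⟨r, hrN⟩ (p + d),
        Function.update sr.tank ⟨r, hrN⟩ (sr.tank ⟨r, hrN⟩ - |p + d - sr.pos ⟨r, hrN⟩|),
        sr.depot⟩ : MultiState N)
        = ⟨fun i => if (i : ℕ) < r + 1 then p + d else s.pos i,
          fun i => if (i : ℕ) < r + 1 then t - d else s.tank i, s.depot⟩ := by
      refine MultiState.ext' ?_ ?_ rfl
      · funext i
        show Function.update sr.pos ⟨r, hrN⟩ (p + d) i
            = if (i : ℕ) < r + 1 then p + d else s.pos i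
        rw [Function.update_apply]
        rcases eq_or_ne i ⟨r, hrN⟩ with hi | hi
        · subst hi
          rw [if_pos rfl, if_pos (Nat.lt_succ_self r)]
        · have hir : (i : ℕ) ≠ r := fun h => hi (Fin.ext h)
          rw [if_neg hi]
          show (if (i : ℕ) < r then p + d else s.pos i) = _
          rcases Nat.lt_or_ge (i : ℕ) r with h | h
          · rw [if_pos h, if_pos (by omega)]
          · rw [if_neg (by omega), if_neg (by omega)]
      · funext i
        show Function.update sr.tank ⟨r, hrN⟩ (sr.tank ⟨r, hrN⟩ - |p + d - sr.pos ⟨r, hrN⟩|) i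
            = if (i : ℕ) < r + 1 then t - d else s.tank i
        rw [habs, ht0', Function.update_apply]
        rcases eq_or_ne i ⟨r, hrN⟩ with hi | hi
        · subst hi
          rw [if_pos rfl, if_pos (Nat.lt_succ_self r)]
        · have hir : (i : ℕ) ≠ r := fun h => hi (Fin.ext h)
          rw [if_neg hi]
          show (if (i : ℕ) < r then t - d else s.tank i) = _
          rcases Nat.lt_or_ge (i : ℕ) r with h | h
          · rw [if_pos h, if_pos (by omega)]
          · rw [if_neg (by omega), if_neg (by omega)]
    exact he ▸ hstep

/-- Jeep `m - 1` donates `1/m` of fuel to each of the jeeps `0, …, m - 2`,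
topping up their tanks to full and emptying its own. -/
lemma multi_donateAll {N : ℕ} (s : MultiState N) (m : ℕ) (hm2 : 2 ≤ m) (hm : m ≤ N) (p : ℝ)
    (hs : ∀ i : Fin N, (i : ℕ) < m → s.pos i = p ∧ s.tank i = 1 - 1 / (m : ℝ)) :
    MultiReach s ⟨s.pos,
      fun i => if (i : ℕ) < m - 1 then 1 else
        if (i : ℕ) = m - 1 then 0 else s.tank i, s.depot⟩ := by
  have hm0 : (0 : ℝ) < (m : ℝ) := by exact_mod_cast (by omega : 0 < m)
  have hmne : (m : ℝ) ≠ 0 := ne_of_gt hm0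
  have hdN : m - 1 < N := by omega
  suffices H : ∀ r ≤ m - 1, MultiReach s ⟨s.pos,
      fun i => if (i : ℕ) < r then 1 else
        if (i : ℕ) = m - 1 then 1 - ((r : ℝ) + 1) / (m : ℝ) else s.tank i, s.depot⟩ by
    have h := H (m - 1) le_rfl
    have hcast : ((m - 1 : ℕ) : ℝ) + 1 = (m : ℝ) := by
      push_cast [Nat.cast_sub (by omega : 1 ≤ m)]
      ring
    have he : (⟨s.pos, fun i => if (i : ℕ) < m - 1 then 1 else
        if (i : ℕ) = m - 1 then 1 - (((m - 1 : ℕ) : ℝ) + 1) / (m : ℝ) else s.tank i,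
        s.depot⟩ : MultiState N)
        = ⟨s.pos, fun i => if (i : ℕ) < m - 1 then 1 else
        if (i : ℕ) = m - 1 then 0 else s.tank i, s.depot⟩ := by
      refine MultiState.ext' rfl ?_ rfl
      funext i
      show (if (i : ℕ) < m - 1 then (1:ℝ) else
          if (i : ℕ) = m - 1 then 1 - (((m - 1 : ℕ) : ℝ) + 1) / (m : ℝ) else s.tank i)
          = if (i : ℕ) < m - 1 then 1 else if (i : ℕ) = m - 1 then 0 else s.tank i
      rcases Nat.lt_or_ge (i : ℕ) (m - 1) with h1 | h1
      · rw [if_pos h1, if_pos h1]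
      · have h1' : ¬ (i : ℕ) < m - 1 := Nat.not_lt.mpr h1
        rw [if_neg h1', if_neg h1']
        rcases eq_or_ne ((i : ℕ)) (m - 1) with h2 | h2
        · rw [if_pos h2, if_pos h2, hcast, div_self hmne]
          norm_num
        · rw [if_neg h2, if_neg h2]
    exact he ▸ h
  intro r hr
  induction r with
  | zero =>
    have he : s = (⟨s.pos, fun i => if (i : ℕ) < 0 then 1 else
        if (i : ℕ) = m - 1 then 1 - (((0 : ℕ) : ℝ) + 1) / (m : ℝ) else s.tank i,
        s.depot⟩ : MultiState N) := by
      refine MultiState.ext' rfl ?_ rfl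
      funext i
      show s.tank i = if (i : ℕ) < 0 then 1 else
          if (i : ℕ) = m - 1 then 1 - (((0 : ℕ) : ℝ) + 1) / (m : ℝ) else s.tank i
      rw [if_neg (Nat.not_lt.mpr (Nat.zero_le _))]
      rcases eq_or_ne ((i : ℕ)) (m - 1) with h2 | h2
      · have him : (i : ℕ) < m := by omega
        rw [if_pos h2, (hs i him).2]
        norm_num
      · rw [if_neg h2]
    rw [← he]
  | succ r ih =>
    refine Relation.ReflTransGen.tail (ih (by omega)) ?_
    have hrm : r < m - 1 := by omega
    have hrN : r < N := by omega
    set sr : MultiState N := ⟨s.pos, fun i => if (i : ℕ) < r then 1 else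
        if (i : ℕ) = m - 1 then 1 - ((r : ℝ) + 1) / (m : ℝ) else s.tank i, s.depot⟩ with hsr
    have hij : (⟨m - 1, hdN⟩ : Fin N) ≠ ⟨r, hrN⟩ := by
      simp only [ne_eq, Fin.mk.injEq]
      omega
    have htd : sr.tank ⟨m - 1, hdN⟩ = 1 - ((r : ℝ) + 1) / (m : ℝ) := by
      show (if m - 1 < r then (1:ℝ) else
          if m - 1 = m - 1 then 1 - ((r : ℝ) + 1) / (m : ℝ) else s.tank ⟨m - 1, hdN⟩)
          = 1 - ((r : ℝ) + 1) / (m : ℝ)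
      have hne : ¬ m - 1 < r := by omega
      rw [if_neg hne, if_pos rfl]
    have htr : sr.tank ⟨r, hrN⟩ = 1 - 1 / (m : ℝ) := by
      show (if r < r then (1:ℝ) else
          if r = m - 1 then 1 - ((r : ℝ) + 1) / (m : ℝ) else s.tank ⟨r, hrN⟩)
          = 1 - 1 / (m : ℝ)
      have hne : ¬ r = m - 1 := by omega
      have hrm' : r < m := by omega
      rw [if_neg (lt_irrefl r), if_neg hne]
      exact (hs ⟨r, hrN⟩ hrm').2
    have hr2m : (r : ℝ) + 2 ≤ (m : ℝ) := by exact_mod_cast (by omega : r + 2 ≤ m)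
    have hstep := MultiStep.transferJeep sr ⟨m - 1, hdN⟩ ⟨r, hrN⟩ hij
        (by
          show s.pos ⟨m - 1, hdN⟩ = s.pos ⟨r, hrN⟩
          have ha : m - 1 < m := by omega
          have hb : r < m := by omega
          rw [(hs ⟨m - 1, hdN⟩ ha).1, (hs ⟨r, hrN⟩ hb).1])
        (1 - ((r : ℝ) + 2) / (m : ℝ)) 1
        (by rw [htd, htr]; field_simp; ring)
        (by
          have h1 : ((r : ℝ) + 2) / (m : ℝ) ≤ 1 := by
            rw [div_le_one hm0]; exact hr2m
          linarith)
        (by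
          have h1 : 0 ≤ ((r : ℝ) + 2) / (m : ℝ) := by positivity
          linarith)
        zero_le_one le_rfl
    have he : (⟨sr.pos,
        Function.update (Function.update sr.tank ⟨m - 1, hdN⟩
          (1 - ((r : ℝ) + 2) / (m : ℝ))) ⟨r, hrN⟩ 1, sr.depot⟩ : MultiState N)
        = ⟨s.pos, fun i => if (i : ℕ) < r + 1 then 1 else
          if (i : ℕ) = m - 1 then 1 - (((r + 1 : ℕ) : ℝ) + 1) / (m : ℝ) else s.tank i,
          s.depot⟩ := by
      refine MultiState.ext' rfl ?_ rfl
      funext i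
      show Function.update (Function.update sr.tank ⟨m - 1, hdN⟩
          (1 - ((r : ℝ) + 2) / (m : ℝ))) ⟨r, hrN⟩ 1 i
          = if (i : ℕ) < r + 1 then 1 else
            if (i : ℕ) = m - 1 then 1 - (((r + 1 : ℕ) : ℝ) + 1) / (m : ℝ) else s.tank i
      rw [Function.update_apply, Function.update_apply]
      rcases eq_or_ne i ⟨r, hrN⟩ with hi | hi
      · subst hi
        rw [if_pos rfl, if_pos (Nat.lt_succ_self r)]
      · rw [if_neg hi]
        have hir : (i : ℕ) ≠ r := fun h => hi (Fin.ext h)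
        rcases eq_or_ne i ⟨m - 1, hdN⟩ with hi2 | hi2
        · subst hi2
          rw [if_pos rfl, if_neg (show ¬ (m - 1 < r + 1) by omega),
            if_pos (rfl : m - 1 = m - 1)]
          push_cast
          ring
        · rw [if_neg hi2]
          have him : (i : ℕ) ≠ m - 1 := fun h => hi2 (Fin.ext h)
          show (if (i : ℕ) < r then (1:ℝ) else
              if (i : ℕ) = m - 1 then 1 - ((r : ℝ) + 1) / (m : ℝ) else s.tank i) = _
          rcases Nat.lt_or_ge (i : ℕ) r with h | h
          · rw [if_pos h, if_pos (by omega)]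
          · rw [if_neg (by omega), if_neg him, if_neg (by omega), if_neg him]
    exact he ▸ hstep

/-- With `n ≥ 1` designated crossing jeeps and `x − n` helper jeeps (`x ≥ n`
tankloads, none required to return), there is a plan with `x` tankloads after
which each of the `n` designated jeeps has reached position
`1 + Σ_{j=n+1}^{x} 1/j`. -/
theorem multi_helpers_oneway_reachable (n x : ℕ) (hn : 1 ≤ n) (hx : n ≤ x) :
    ∃ (k : ℕ) (f : ℕ → MultiState (n + (x - n))),
      f 0 = multiInit (n + (x - n)) (x : ℝ) ∧
      (∀ j < k, MultiStep (f j) (f (j + 1))) ∧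
      (∀ i : Fin (n + (x - n)), (i : ℕ) < n →
        ∃ j ≤ k, (f j).pos i = 1 + ∑ l ∈ Finset.Icc (n + 1) x, 1 / (l : ℝ)) := by
  set N := n + (x - n) with hNdef
  have hNx : N = x := by omega
  have key : ∀ j, j ≤ x - n → ∃ s : MultiState N, MultiReach (multiInit N (x : ℝ)) s ∧
      ∀ i : Fin N, (i : ℕ) < x - j →
        s.pos i = ∑ l ∈ Finset.Icc (x - j + 1) x, 1 / (l : ℝ) ∧ s.tank i = 1 := by
    intro j
    induction j with
    | zero =>
      intro _
      refine ⟨_, multi_refuel N x (by omega), ?_⟩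
      intro i hi
      constructor
      · show (0 : ℝ) = ∑ l ∈ Finset.Icc (x - 0 + 1) x, 1 / (l : ℝ)
        rw [Finset.Icc_eq_empty (by omega), Finset.sum_empty]
      · rfl
    | succ j ih =>
      intro hj
      obtain ⟨s, hsR, hsP⟩ := ih (by omega)
      set m := x - j with hm
      have hm2 : 2 ≤ m := by omega
      have hmN : m ≤ N := by omega
      have hm0 : (0 : ℝ) < (m : ℝ) := by exact_mod_cast (by omega : 0 < m)
      set P : ℝ := ∑ l ∈ Finset.Icc (m + 1) x, 1 / (l : ℝ) with hP
      have h1 := multi_driveAll s m hmN P 1 (1 / (m : ℝ)) (by positivity)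
        (by rw [div_le_one hm0]; exact_mod_cast (by omega : 1 ≤ m))
        (fun i hi => hsP i hi)
      set s1 : MultiState N := ⟨fun i => if (i : ℕ) < m then P + 1 / (m : ℝ) else s.pos i,
        fun i => if (i : ℕ) < m then 1 - 1 / (m : ℝ) else s.tank i, s.depot⟩ with hs1
      have hs1p : ∀ i : Fin N, (i : ℕ) < m →
          s1.pos i = P + 1 / (m : ℝ) ∧ s1.tank i = 1 - 1 / (m : ℝ) := by
        intro i hi
        constructor
        · show (if (i : ℕ) < m then P + 1 / (m : ℝ) else s.pos i) = P + 1 / (m : ℝ)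
          rw [if_pos hi]
        · show (if (i : ℕ) < m then 1 - 1 / (m : ℝ) else s.tank i) = 1 - 1 / (m : ℝ)
          rw [if_pos hi]
      have h2 := multi_donateAll s1 m hm2 hmN (P + 1 / (m : ℝ)) hs1p
      refine ⟨_, hsR.trans (h1.trans h2), ?_⟩
      intro i hi
      have him : (i : ℕ) < m - 1 := by omega
      have hsum : ∑ l ∈ Finset.Icc (x - (j + 1) + 1) x, 1 / (l : ℝ) = P + 1 / (m : ℝ) := by
        have hidx : x - (j + 1) + 1 = m := by omega
        rw [hidx, hP, show Finset.Icc m x = insert m (Finset.Icc (m + 1) x) from by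
            ext a; simp only [Finset.mem_Icc, Finset.mem_insert]; omega,
          Finset.sum_insert (by simp only [Finset.mem_Icc]; omega)]
        ring
      constructor
      · show s1.pos i = _
        show (if (i : ℕ) < m then P + 1 / (m : ℝ) else s.pos i) = _
        rw [if_pos (by omega), hsum]
      · show (if (i : ℕ) < m - 1 then (1:ℝ) else
            if (i : ℕ) = m - 1 then 0 else s1.tank i) = 1
        rw [if_pos him]
  obtain ⟨s, hsR, hsP⟩ := key (x - n) le_rfl
  have hxn : x - (x - n) = n := by omega
  have hfin := multi_driveAll s n (by omega) (∑ l ∈ Finset.Icc (n + 1) x, 1 / (l : ℝ)) 1 1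
      zero_le_one le_rfl
      (by
        intro i hi
        have h := hsP i (by omega)
        rwa [hxn] at h)
  obtain ⟨k, f, h0, hsteps, hk⟩ := multiReach_to_plan (hsR.trans hfin)
  refine ⟨k, f, h0, hsteps, ?_⟩
  intro i hi
  refine ⟨k, le_rfl, ?_⟩
  rw [hk]
  show (if (i : ℕ) < n then (∑ l ∈ Finset.Icc (n + 1) x, 1 / (l : ℝ)) + 1 else s.pos i)
      = 1 + ∑ l ∈ Finset.Icc (n + 1) x, 1 / (l : ℝ)
  rw [if_pos hi]
  ring
end

section
/- Let n ≥ 1 and x ≥ n be integers. In the multi-jeep model with n designated crossing jeeps and any number m of helper jeeps, for every plan with x tankloads in which each of the n designated jeeps reaches a state with position ≥ d, one has d ≤ 1 + Σ_{j=n+1}^{x} 1/j. -/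
open MeasureTheory Set

lemma Fintype.sum_ite_update_add {ι : Type*} [Fintype ι] [DecidableEq ι] (p : ι → Prop)
    [DecidablePred p] (g : ι → ℝ) (i : ι) (v : ℝ) :
    ∑ j, (if p j then Function.update g i v j else 0) + (if p i then g i else 0) =
      ∑ j, (if p j then g j else 0) + if p i then v else 0 := by
  have hupdate : (fun j => if p j then Function.update g i v j else 0) =
      Function.update (fun j => if p j then g j else 0) i (if p i then v else 0) :=
    funext (Function.apply_update (fun j t => if p j then t else 0) g i v)
  rw [hupdate, Finset.sum_update_of_mem (Finset.mem_univ i),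
    Finset.sum_eq_add_sum_sdiff_singleton_of_mem (Finset.mem_univ i)]
  ring

-- One drive seen from `(y, ∞)`: the distance driven there is paid from the tank, which holds at
-- most one tankload when the jeep enters.
lemma abs_max_sub_max_le_of_drive (y a b t : ℝ) (hab : |b - a| ≤ t) (ht : t ≤ 1) :
    (if y < b then t - |b - a| else 0) + |max b y - max a y| ≤
      (if y < a then t else 0) + if a ≤ y ∧ y < b then 1 else 0 := by
  rcases le_total a b with h | h
  · rw [abs_of_nonneg (sub_nonneg.2 h)] at hab ⊢
    rw [abs_of_nonneg (sub_nonneg.2 (max_le_max_right y h))]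
    simp only [max_def, ite_and]
    split_ifs <;> linarith
  · rw [abs_of_nonpos (sub_nonpos.2 h)] at hab ⊢
    rw [abs_of_nonpos (sub_nonpos.2 (max_le_max_right y h))]
    simp only [max_def, ite_and]
    split_ifs <;> linarith

lemma integral_indicator_Ico_le_sub {y y' : ℝ} (hyy' : y ≤ y') (a b : ℝ) :
    ∫ t in Ico y y', (Ico a b).indicator 1 t ≤ |max b y - max a y| - |max b y' - max a y'| := by
  rw [integral_indicator_one measurableSet_Ico, measureReal_restrict_apply measurableSet_Ico,
    Ico_inter_Ico, Real.volume_real_Ico]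
  rcases le_total a b with hab | hab
  · rw [abs_of_nonneg (sub_nonneg.2 (max_le_max_right y hab)),
      abs_of_nonneg (sub_nonneg.2 (max_le_max_right y' hab))]
    simp only [max_def, min_def]
    split_ifs <;> linarith
  · rw [abs_of_nonpos (sub_nonpos.2 (max_le_max_right y hab)),
      abs_of_nonpos (sub_nonpos.2 (max_le_max_right y' hab))]
    simp only [max_def, min_def]
    split_ifs <;> linarith

lemma integrableOn_indicator_Ico_Ico (a b y y' : ℝ) :
    IntegrableOn ((Ico a b).indicator (1 : ℝ → ℝ)) (Ico y y') :=
  (integrableOn_const (C := (1 : ℝ)) (by simp)).indicator measurableSet_Ico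

lemma exists_crossing_of_lt (p : ℕ → ℝ) {t : ℝ} (h0 : p 0 ≤ t) {j : ℕ} (hj : t < p j) :
    ∃ i < j, p i ≤ t ∧ t < p (i + 1) := by
  induction j with
  | zero => exact absurd h0 hj.not_ge
  | succ j ih =>
    by_cases hpj : t < p j
    · obtain ⟨i, hij, hi⟩ := ih hpj
      exact ⟨i, by omega, hi⟩
    · exact ⟨j, j.lt_succ_self, not_lt.1 hpj, hj⟩

def SteepAboveLevels (C : ℝ → ℝ) : Prop :=
  ∀ (j : ℕ) ⦃z v : ℝ⦄, 0 ≤ z → z ≤ v → (∀ t ∈ Ico z v, (j : ℝ) < C t) →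
    (j + 1) * (v - z) + C v ≤ C z

namespace SteepAboveLevels

variable {C : ℝ → ℝ}

lemma bound_start (hC : SteepAboveLevels C) {n : ℕ} (hn : 1 ≤ n) {d : ℝ}
    (hlin : ∀ t ∈ Icc 0 d, n * (d - t) ≤ C t) :
    ∀ z ∈ Icc 0 (d - 1), n + (n + 1) * (d - 1 - z) ≤ C z := by
  rintro z ⟨hz, hzd⟩
  have hn' : (1 : ℝ) ≤ n := by exact_mod_cast hn
  have hgt : ∀ t ∈ Ico z (d - 1), (n : ℝ) < C t := fun t ht => by
    have := hlin t ⟨hz.trans ht.1, by linarith [ht.2]⟩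
    nlinarith [ht.2]
  have hd := hlin (d - 1) ⟨hz.trans hzd, by linarith⟩
  linarith [hC n hz hzd hgt]

lemma bound_succ (hC : SteepAboveLevels C) {j : ℕ} {w : ℝ}
    (hw : ∀ z ∈ Icc 0 w, j + (j + 1) * (w - z) ≤ C z) :
    ∀ z ∈ Icc 0 (w - 1 / (j + 1)), (j + 1 : ℝ) + (j + 2) * (w - 1 / (j + 1) - z) ≤ C z := by
  rintro z ⟨hz, hzv⟩
  have hj : (0 : ℝ) < j + 1 := by positivity
  have hinv : (j + 1 : ℝ) * (1 / (j + 1)) = 1 := by field_simp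
  have hgt : ∀ t ∈ Ico z (w - 1 / (j + 1)), ((j + 1 : ℕ) : ℝ) < C t := fun t ht => by
    have hCt := hw t ⟨hz.trans ht.1, by linarith [ht.2, one_div_pos.2 hj]⟩
    have : (j + 1 : ℝ) * (1 / (j + 1)) < (j + 1) * (w - t) :=
      mul_lt_mul_of_pos_left (by linarith [ht.2]) hj
    push_cast
    linarith
  have hv := hw (w - 1 / (j + 1)) ⟨hz.trans hzv, by linarith [one_div_pos.2 hj]⟩
  have := hC (j + 1) hz hzv hgt
  push_cast at this
  rw [sub_sub_cancel] at hv
  linarith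

lemma le_one_add_sum_inv (hC : SteepAboveLevels C) {n x : ℕ} (hn : 1 ≤ n) (hx : n ≤ x)
    {d : ℝ} (hlin : ∀ t ∈ Icc 0 d, n * (d - t) ≤ C t) (hC0 : C 0 ≤ x) :
    d ≤ 1 + ∑ l ∈ Finset.Icc (n + 1) x, 1 / (l : ℝ) := by
  have hlevel : ∀ j, n ≤ j → ∀ z ∈ Icc 0 (d - 1 - ∑ l ∈ Finset.Icc (n + 1) j, 1 / (l : ℝ)),
      j + (j + 1) * (d - 1 - ∑ l ∈ Finset.Icc (n + 1) j, 1 / (l : ℝ) - z) ≤ C z := by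
    intro j hj
    induction j, hj using Nat.le_induction with
    | base => simpa using hC.bound_start hn hlin
    | succ j hj ih =>
      rw [Finset.sum_Icc_succ_top (by omega), ← sub_sub]
      push_cast
      convert hC.bound_succ ih using 3
      ring
  by_contra! hd
  have hw : 0 < d - 1 - ∑ l ∈ Finset.Icc (n + 1) x, 1 / (l : ℝ) := by linarith
  have := hlevel x hx 0 ⟨le_rfl, hw.le⟩
  nlinarith

end SteepAboveLevels

namespace MultiState

variable {N : ℕ}

def Feasible (s : MultiState N) : Prop :=
  (∀ i, s.tank i ∈ Icc 0 1) ∧ ∀ q, 0 ≤ s.depot q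

noncomputable def fuelRight (s : MultiState N) (y : ℝ) : ℝ :=
  (s.depot.sum fun q v => if y < q then v else 0) + ∑ i, if y < s.pos i then s.tank i else 0

lemma Feasible.fuelRight_nonneg {s : MultiState N} (hs : s.Feasible) (y : ℝ) :
    0 ≤ s.fuelRight y := by
  refine add_nonneg (Finset.sum_nonneg fun q _ => ?_) (Finset.sum_nonneg fun i _ => ?_)
  · exact ite_nonneg (hs.2 q) le_rfl
  · exact ite_nonneg (hs.1 i).1 le_rfl

lemma feasible_multiInit {x : ℝ} (hx : 0 ≤ x) : (multiInit N x).Feasible := by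
  refine ⟨fun _ => ⟨le_rfl, zero_le_one⟩, fun q => ?_⟩
  simp only [multiInit, Finsupp.single_apply]
  split_ifs <;> [exact hx; exact le_rfl]

lemma fuelRight_multiInit (x y : ℝ) :
    (multiInit N x).fuelRight y = if y < 0 then x else 0 := by
  have htank : ∑ i, (if y < (multiInit N x).pos i then (multiInit N x).tank i else 0) = 0 :=
    Finset.sum_eq_zero fun _ _ => ite_self 0
  rw [fuelRight, htank, add_zero]
  exact Finsupp.sum_single_index (ite_self 0)

end MultiState

namespace MultiStep

open MultiState

variable {N : ℕ} {s s' : MultiState N}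

lemma feasible (h : MultiStep s s') (hs : s.Feasible) : s'.Feasible := by
  obtain ⟨htank, hdepot⟩ := hs
  cases h with
  | drive i p' hi =>
    refine ⟨fun j => ?_, hdepot⟩
    rcases eq_or_ne j i with rfl | hj
    · simp only [Function.update_self]
      exact ⟨hi, by linarith [(htank j).2, abs_nonneg (p' - s.pos j)]⟩
    · simpa [hj] using htank j
  | transferDepot i t' D' _ ht0 ht1 hD _ =>
    refine ⟨fun j => ?_, hD⟩
    rcases eq_or_ne j i with rfl | hj
    · simpa using ⟨ht0, ht1⟩
    · simpa [hj] using htank j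
  | transferJeep i i' _ _ ti' ti'' _ hi0 hi1 hi'0 hi'1 =>
    refine ⟨fun j => ?_, hdepot⟩
    simp only [Function.update_apply]
    split_ifs
    exacts [⟨hi'0, hi'1⟩, ⟨hi0, hi1⟩, htank j]

lemma fuelRight_add_le (h : MultiStep s s') (hs : s.Feasible) (y : ℝ) :
    s'.fuelRight y + ∑ i, |max (s'.pos i) y - max (s.pos i) y| ≤
      s.fuelRight y + ∑ i, if s.pos i ≤ y ∧ y < s'.pos i then 1 else 0 := by
  cases h with
  | drive i p' hi =>
    simp only [fuelRight, add_assoc, ← Finset.sum_add_distrib]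
    refine add_le_add le_rfl (Finset.sum_le_sum fun j _ => ?_)
    rcases eq_or_ne j i with rfl | hj
    · simpa using abs_max_sub_max_le_of_drive y (s.pos j) p' (s.tank j) (by linarith) (hs.1 j).2
    · simp only [Function.update_of_ne hj, sub_self, abs_zero, add_zero]
      exact le_add_of_nonneg_right (ite_nonneg zero_le_one le_rfl)
  | transferDepot i t' D' hcons _ _ _ hD =>
    have hD' : s.depot.update (s.pos i) (D' (s.pos i)) = D' := by
      ext q
      rcases eq_or_ne q (s.pos i) with rfl | hq
      · simp
      · simp [hq, hD q hq]
    have hdepot := Finsupp.sum_update_add s.depot (s.pos i) (D' (s.pos i))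
      (fun q v => if y < q then v else 0) (fun _ => ite_self 0) (fun _ _ _ => ite_add_zero)
    have htank := Fintype.sum_ite_update_add (fun j => y < s.pos j) s.tank i t'
    rw [hD'] at hdepot
    have hfuel : fuelRight ⟨s.pos, Function.update s.tank i t', D'⟩ y = s.fuelRight y := by
      simp only [fuelRight]
      split_ifs at hdepot htank <;> linarith
    simp [hfuel]
  | transferJeep i i' hii' hpos ti' ti'' hcons =>
    have htank₁ := Fintype.sum_ite_update_add (fun j => y < s.pos j) s.tank i ti'
    have htank₂ := Fintype.sum_ite_update_add (fun j => y < s.pos j)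
      (Function.update s.tank i ti') i' ti''
    rw [Function.update_of_ne hii'.symm] at htank₂
    have hfuel : fuelRight ⟨s.pos, Function.update (Function.update s.tank i ti') i' ti'',
        s.depot⟩ y = s.fuelRight y := by
      simp only [fuelRight]
      rw [hpos] at htank₁
      split_ifs at htank₁ htank₂ <;> linarith
    simp [hfuel]

end MultiStep

section Plan

variable {N : ℕ} (k : ℕ) (f : ℕ → MultiState N)

-- `|max b y - max a y|` is the length of the part of a drive from `a` to `b` lying right of `y`.
noncomputable def consumptionRight (y : ℝ) : ℝ :=
  ∑ j ∈ Finset.range k, ∑ i, |max ((f (j + 1)).pos i) y - max ((f j).pos i) y|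

noncomputable def upCrossings (y : ℝ) : ℕ :=
  ∑ j ∈ Finset.range k, ∑ i, if (f j).pos i ≤ y ∧ y < (f (j + 1)).pos i then 1 else 0

lemma consumptionRight_nonneg (y : ℝ) : 0 ≤ consumptionRight k f y := by
  unfold consumptionRight
  positivity

lemma upCrossings_eq_sum_indicator (y : ℝ) :
    (upCrossings k f y : ℝ) =
      ∑ j ∈ Finset.range k, ∑ i, (Ico ((f j).pos i) ((f (j + 1)).pos i)).indicator 1 y := by
  simp [upCrossings, Set.indicator_apply]

lemma integrableOn_upCrossings (y y' : ℝ) :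
    IntegrableOn (fun t => (upCrossings k f t : ℝ)) (Ico y y') := by
  simp only [upCrossings_eq_sum_indicator]
  exact integrable_finsetSum _ fun j _ => integrable_finsetSum _ fun i _ =>
    integrableOn_indicator_Ico_Ico _ _ _ _

lemma integral_upCrossings_le {y y' : ℝ} (hyy' : y ≤ y') :
    ∫ t in Ico y y', (upCrossings k f t : ℝ) ≤
      consumptionRight k f y - consumptionRight k f y' := by
  have hint := integrableOn_indicator_Ico_Ico (y := y) (y' := y')
  simp only [upCrossings_eq_sum_indicator]
  rw [integral_finsetSum _ fun j _ => integrable_finsetSum _ fun i _ => hint _ _]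
  simp only [consumptionRight, ← Finset.sum_sub_distrib]
  refine Finset.sum_le_sum fun j _ => ?_
  rw [integral_finsetSum _ fun i _ => hint _ _]
  exact Finset.sum_le_sum fun i _ => integral_indicator_Ico_le_sub hyy' _ _

lemma add_consumptionRight_le {y y' : ℝ} (hyy' : y ≤ y') (c : ℕ)
    (hc : ∀ t ∈ Ico y y', c ≤ upCrossings k f t) :
    c * (y' - y) + consumptionRight k f y' ≤ consumptionRight k f y := by
  have hge := setIntegral_ge_of_const_le_real measurableSet_Ico (by simp)
    (fun t ht => Nat.cast_le.2 (hc t ht)) (integrableOn_upCrossings k f y y')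
  rw [Real.volume_real_Ico, max_eq_left (sub_nonneg.2 hyy')] at hge
  linarith [integral_upCrossings_le k f hyy']

variable {k f}

lemma feasible_of_multiStep (hf : ∀ j < k, MultiStep (f j) (f (j + 1)))
    (h0 : (f 0).Feasible) : ∀ j ≤ k, (f j).Feasible := by
  intro j
  induction j with
  | zero => exact fun _ => h0
  | succ j ih => exact fun hj => (hf j hj).feasible (ih (by omega))

lemma fuelRight_add_consumptionRight_le (hf : ∀ j < k, MultiStep (f j) (f (j + 1)))
    (h0 : (f 0).Feasible) (y : ℝ) :
    (f k).fuelRight y + consumptionRight k f y ≤ (f 0).fuelRight y + upCrossings k f y := by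
  induction k with
  | zero => simp [consumptionRight, upCrossings]
  | succ k ih =>
    have hlast := (hf k k.lt_succ_self).fuelRight_add_le
      (feasible_of_multiStep hf h0 k k.le_succ) y
    have hprefix := ih fun j hj => hf j (by omega)
    simp only [consumptionRight, upCrossings, Finset.sum_range_succ] at hprefix ⊢
    push_cast at hprefix ⊢
    linarith

lemma consumptionRight_le_upCrossings (hf : ∀ j < k, MultiStep (f j) (f (j + 1)))
    {x : ℝ} (h0 : f 0 = multiInit N x) (hx : 0 ≤ x) {t : ℝ} (ht : 0 ≤ t) :
    consumptionRight k f t ≤ upCrossings k f t := by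
  have hfeas : (f 0).Feasible := h0 ▸ MultiState.feasible_multiInit hx
  have hbalance := fuelRight_add_consumptionRight_le hf hfeas t
  rw [h0, MultiState.fuelRight_multiInit, if_neg ht.not_gt] at hbalance
  linarith [(feasible_of_multiStep hf hfeas k le_rfl).fuelRight_nonneg t]

lemma consumptionRight_zero_le (hf : ∀ j < k, MultiStep (f j) (f (j + 1)))
    {x : ℝ} (h0 : f 0 = multiInit N x) (hx : 0 ≤ x) :
    consumptionRight k f 0 ≤ x := by
  -- Left of every position of the plan, no jeep ever crosses and all the fuel lies to the right.
  obtain ⟨y, hy0, hy⟩ : ∃ y < 0, ∀ j ∈ Finset.range (k + 1), ∀ i, y < (f j).pos i :=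
    ((Filter.eventually_lt_atBot 0).and ((Filter.eventually_all_finset _).2 fun j _ =>
      Filter.eventually_all.2 fun i => Filter.eventually_lt_atBot _)).exists
  have hfeas : (f 0).Feasible := h0 ▸ MultiState.feasible_multiInit hx
  have hbalance := fuelRight_add_consumptionRight_le hf hfeas y
  have hnone : upCrossings k f y = 0 :=
    Finset.sum_eq_zero fun j hj => Finset.sum_eq_zero fun i _ => if_neg fun h =>
      (hy j (Finset.mem_range.2 (Nat.lt_succ_of_lt (Finset.mem_range.1 hj))) i).not_ge h.1
  rw [h0, MultiState.fuelRight_multiInit, if_pos hy0, hnone, Nat.cast_zero, add_zero] at hbalance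
  have hmono := add_consumptionRight_le k f hy0.le 0 fun _ _ => Nat.zero_le _
  rw [Nat.cast_zero, zero_mul, zero_add] at hmono
  linarith [(feasible_of_multiStep hf hfeas k le_rfl).fuelRight_nonneg y]

end Plan

lemma le_upCrossings {n m k : ℕ} {f : ℕ → MultiState (n + m)} {t : ℝ}
    (h0 : ∀ i, (f 0).pos i ≤ t)
    (hreach : ∀ i : Fin (n + m), (i : ℕ) < n → ∃ j ≤ k, t < (f j).pos i) :
    n ≤ upCrossings k f t := by
  have hone : ∀ i : Fin (n + m), (i : ℕ) < n →
      1 ≤ ∑ j ∈ Finset.range k, if (f j).pos i ≤ t ∧ t < (f (j + 1)).pos i then 1 else 0 := by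
    intro i hi
    obtain ⟨j, hjk, hj⟩ := hreach i hi
    obtain ⟨j', hj'j, hcross⟩ := exists_crossing_of_lt (fun j => (f j).pos i) (h0 i) hj
    calc 1 = if (f j').pos i ≤ t ∧ t < (f (j' + 1)).pos i then 1 else 0 := (if_pos hcross).symm
      _ ≤ _ := Finset.single_le_sum
          (f := fun j => if (f j).pos i ≤ t ∧ t < (f (j + 1)).pos i then 1 else 0)
          (fun _ _ => Nat.zero_le _) (Finset.mem_range.2 (by omega))
  rw [upCrossings, Finset.sum_comm, Fin.sum_univ_add]
  calc n = ∑ _i : Fin n, 1 := by simp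
    _ ≤ _ := Finset.sum_le_sum fun i _ => hone _ (by simp)
    _ ≤ _ := Nat.le_add_right _ _

lemma steepAboveLevels_consumptionRight {N k : ℕ} {f : ℕ → MultiState N}
    (hf : ∀ j < k, MultiStep (f j) (f (j + 1))) {x : ℝ} (h0 : f 0 = multiInit N x)
    (hx : 0 ≤ x) : SteepAboveLevels (consumptionRight k f) := by
  intro j z v hz hzv hj
  exact_mod_cast add_consumptionRight_le k f hzv (j + 1) fun t ht => by
    have := (hj t ht).trans_le (consumptionRight_le_upCrossings hf h0 hx (hz.trans ht.1))
    exact_mod_cast this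

/-- With `n ≥ 1` designated crossing jeeps and any number `m` of helper jeeps,
for every plan with `x ≥ n` tankloads in which each designated jeep reaches a
state with position `≥ d`, one has `d ≤ 1 + Σ_{j=n+1}^{x} 1/j`. -/
theorem multi_helpers_oneway_bound (n x m : ℕ) (hn : 1 ≤ n) (hx : n ≤ x)
    (d : ℝ) (k : ℕ) (f : ℕ → MultiState (n + m))
    (h0 : f 0 = multiInit (n + m) (x : ℝ))
    (hstep : ∀ j < k, MultiStep (f j) (f (j + 1)))
    (hreach : ∀ i : Fin (n + m), (i : ℕ) < n → ∃ j ≤ k, d ≤ (f j).pos i) :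
    d ≤ 1 + ∑ l ∈ Finset.Icc (n + 1) x, 1 / (l : ℝ) := by
  have hx' : (0 : ℝ) ≤ x := Nat.cast_nonneg x
  refine (steepAboveLevels_consumptionRight hstep h0 hx').le_one_add_sum_inv hn hx
    (fun t ht => ?_) (consumptionRight_zero_le hstep h0 hx')
  have hcross : ∀ s ∈ Ico t d, n ≤ upCrossings k f s := fun s hs =>
    le_upCrossings (fun i => by rw [h0]; exact ht.1.trans hs.1)
      fun i hi => (hreach i hi).imp fun j hj => ⟨hj.1, hs.2.trans_le hj.2⟩
  linarith [add_consumptionRight_le k f ht.2 n hcross, consumptionRight_nonneg k f d]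
end

section
/- Let n ≥ 1 and x ≥ n be integers. In the multi-jeep model with exactly n jeeps (no helpers), there is a plan with x tankloads in which every jeep reaches a state with position 1/2 + (1/2)·Σ_{j=n+1}^{x} 1/j and every jeep is at position 0 in the final state; that is, n jeeps can all make a round trip to this distance using x tankloads. -/
/-! The jeeps always travel as a group that starts and ends at a common base with empty tanks.
With `x` tankloads at the base, induct on `x - n`. If `x = n`, every jeep takes one tankload,
and all drive `1/2` out and back. Otherwise set `ε = 1/(2x)` and move the base forward by `ε`:
one jeep ferries the `x - n` surplus tankloads, delivering `1 - 2ε` of each, and then all `n`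
jeeps drive over with full tanks, delivering `1 - ε` each. Because `2xε = 1`, exactly
`(x - 1) + nε` arrives: enough for a round trip with `x - 1` tankloads from the new base, plus `ε`
per jeep for the drive home. The ranges add up to `1/2 + (1/2) Σ_{j=n+1}^{x} 1/j`. -/

open Finset Function Relation
open Finsupp (single single_add single_nonneg single_zero)

section Sequences

variable {α : Type*} {r : α → α → Prop}

theorem Relation.ReflTransGen.exists_seq {a b : α} (h : ReflTransGen r a b) :
    ∃ (k : ℕ) (f : ℕ → α), f 0 = a ∧ f k = b ∧ ∀ j < k, r (f j) (f (j + 1)) := by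
  induction h using ReflTransGen.head_induction_on with
  | refl => exact ⟨0, fun _ => b, rfl, rfl, by simp⟩
  | @head a a' haa' _ ih =>
    obtain ⟨k, f, hf0, hfk, hf⟩ := ih
    refine ⟨k + 1, fun | 0 => a | j + 1 => f j, rfl, hfk, ?_⟩
    rintro (_ | j) hj
    · simpa [hf0] using haa'
    · exact hf j (by omega)

theorem Relation.ReflTransGen.exists_seq_through {a b c : α} (hab : ReflTransGen r a b)
    (hbc : ReflTransGen r b c) :
    ∃ (k : ℕ) (f : ℕ → α), f 0 = a ∧ f k = c ∧ (∀ j < k, r (f j) (f (j + 1))) ∧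
      ∃ j ≤ k, f j = b := by
  induction hab using ReflTransGen.head_induction_on with
  | refl =>
    obtain ⟨k, f, hf0, hfk, hf⟩ := hbc.exists_seq
    exact ⟨k, f, hf0, hfk, hf, 0, k.zero_le, hf0⟩
  | @head a a' haa' _ ih =>
    obtain ⟨k, f, hf0, hfk, hf, j, hj, hfj⟩ := ih
    refine ⟨k + 1, fun | 0 => a | j + 1 => f j, rfl, hfk, ?_, j + 1, by omega, hfj⟩
    rintro (_ | j) hj
    · simpa [hf0] using haa'
    · exact hf j (by omega)

end Sequences

variable {N : ℕ}

local infix:50 " ⟶* " => ReflTransGen MultiStep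

def parked (N : ℕ) (a : ℝ) (D : ℝ →₀ ℝ) : MultiState N := ⟨fun _ => a, 0, D⟩

theorem MultiStep.transferDepot' {p τ : Fin N → ℝ} {E E' : ℝ →₀ ℝ} {i : Fin N} {t : ℝ}
    (ht0 : 0 ≤ t) (ht1 : t ≤ 1) (hE' : 0 ≤ E') (hE : E' = E + single (p i) (τ i - t)) :
    MultiStep ⟨p, τ, E⟩ ⟨p, update τ i t, E'⟩ :=
  MultiStep.transferDepot ⟨p, τ, E⟩ i t E' (by simp [hE]; ring) ht0 ht1 (Finsupp.le_def.1 hE')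
    fun q hq => by simp [hE, hq.symm]

theorem reflTransGen_haul {p : Fin N → ℝ} {i : Fin N} {a b c : ℝ} {D E : ℝ →₀ ℝ} (hD : 0 ≤ D)
    (hE : E = D + single a c) (hp : p i = a) (hc : |b - a| ≤ c) (hc1 : c ≤ 1) :
    ⟨p, 0, E⟩ ⟶* ⟨update p i b, 0, D + single b (c - |b - a|)⟩ := by
  subst hE
  have hc0 : 0 ≤ c := (abs_nonneg _).trans hc
  have load : MultiStep ⟨p, 0, D + single a c⟩ ⟨p, update 0 i c, D⟩ :=
    .transferDepot' (p := p) (τ := 0) hc0 hc1 hD (by simp [hp])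
  have drive : MultiStep ⟨p, update 0 i c, D⟩ ⟨update p i b, update 0 i (c - |b - a|), D⟩ := by
    simpa [hp] using MultiStep.drive ⟨p, update 0 i c, D⟩ i b (by simpa [hp] using hc)
  have unload : MultiStep ⟨update p i b, update 0 i (c - |b - a|), D⟩
      ⟨update p i b, 0, D + single b (c - |b - a|)⟩ := by
    simpa using MultiStep.transferDepot' (p := update p i b) (τ := update 0 i (c - |b - a|))
      (i := i) (E := D) (E' := D + single b (c - |b - a|)) le_rfl zero_le_one
      (add_nonneg hD (single_nonneg.2 (by linarith))) (by rw [update_self, update_self, sub_zero])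
  exact .head load (.head drive (.single unload))

theorem reflTransGen_convoy (S : Finset (Fin N)) {a b c : ℝ} {D : ℝ →₀ ℝ} (hD : 0 ≤ D)
    (hc : |b - a| ≤ c) (hc1 : c ≤ 1) :
    parked N a (D + single a (#S * c)) ⟶*
      ⟨S.piecewise (fun _ => b) (fun _ => a), 0, D + single b (#S * (c - |b - a|))⟩ := by
  induction S using Finset.induction_on generalizing D with
  | empty => simpa [parked] using .refl
  | @insert j S hj ih =>
    have hc0 : 0 ≤ c := (abs_nonneg _).trans hc
    have first := ih (D := D + single a c) (add_nonneg hD (single_nonneg.2 hc0))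
    have last := reflTransGen_haul (p := S.piecewise (fun _ => b) (fun _ => a)) (i := j)
      (D := D + single b (#S * (c - |b - a|))) 
      (add_nonneg hD (single_nonneg.2 (mul_nonneg (Nat.cast_nonneg _) (sub_nonneg.2 hc))))
      (add_right_comm ..) (by simp [hj]) hc hc1
    rw [Finset.piecewise_insert, card_insert_of_notMem hj]
    convert first.trans last using 2
    · simp only [add_assoc, ← single_add]
      push_cast
      ring_nf
    · simp only [add_assoc, ← single_add]
      push_cast
      ring_nf

theorem reflTransGen_convoy_univ {a b c : ℝ} {D : ℝ →₀ ℝ} (hD : 0 ≤ D) (hc : |b - a| ≤ c)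
    (hc1 : c ≤ 1) :
    parked N a (D + single a (N * c)) ⟶* parked N b (D + single b (N * (c - |b - a|))) := by
  simpa [parked] using reflTransGen_convoy (N := N) univ hD hc hc1

theorem reflTransGen_ferry_trip (i : Fin N) {a b : ℝ} {D : ℝ →₀ ℝ} (hD : 0 ≤ D)
    (hab : |b - a| ≤ 1 / 2) :
    parked N a (D + single a 1) ⟶* parked N a (D + single b (1 - 2 * |b - a|)) := by
  have out := reflTransGen_haul (p := fun _ => a) (i := i) (b := b) hD rfl rfl (by linarith)
    le_rfl
  have back := reflTransGen_haul (p := update (fun _ => a) i b) (i := i) (b := a)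
    (D := D + single b (1 - 2 * |b - a|)) (E := D + single b (1 - |b - a|))
    (add_nonneg hD (single_nonneg.2 (by linarith))) (by rw [add_assoc, ← single_add]; ring_nf)
    (update_self ..) (abs_sub_comm ..).le (by linarith)
  unfold parked
  convert out.trans back using 2
  · simp
  · simp [abs_sub_comm]

theorem reflTransGen_ferry (i : Fin N) (k : ℕ) {a b : ℝ} {D : ℝ →₀ ℝ} (hD : 0 ≤ D)
    (hab : |b - a| ≤ 1 / 2) :
    parked N a (D + single a (k : ℝ)) ⟶* parked N a (D + single b (k * (1 - 2 * |b - a|))) := by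
  induction k generalizing D with
  | zero => simpa using .refl
  | succ k ih =>
    have hload : 0 ≤ 1 - 2 * |b - a| := by linarith
    have trip := reflTransGen_ferry_trip (N := N) i (D := D + single a (k : ℝ))
      (add_nonneg hD (single_nonneg.2 k.cast_nonneg)) hab
    have rest := ih (D := D + single b (1 - 2 * |b - a|)) (add_nonneg hD (single_nonneg.2 hload))
    have hsrc : D + single a ((k + 1 : ℕ) : ℝ) = D + single a (k : ℝ) + single a 1 := by
      rw [Nat.cast_succ, single_add, add_assoc]
    have htgt : D + single b ((k + 1 : ℕ) * (1 - 2 * |b - a|))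
        = D + single b (1 - 2 * |b - a|) + single b (k * (1 - 2 * |b - a|)) := by
      rw [add_assoc, ← single_add, Nat.cast_succ]
      ring_nf
    rw [hsrc, htgt]
    exact trip.trans (add_right_comm D (single b _) (single a _) ▸ rest)

noncomputable def roundTripRange (n x : ℕ) : ℝ := 1 / 2 + 1 / 2 * ∑ l ∈ Icc (n + 1) x, 1 / (l : ℝ)

theorem roundTripRange_self (n : ℕ) : roundTripRange n n = 1 / 2 := by
  simp [roundTripRange]

theorem roundTripRange_succ {n x : ℕ} (h : n ≤ x) :
    roundTripRange n (x + 1) = 1 / (2 * (x + 1)) + roundTripRange n x := by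
  rw [roundTripRange, roundTripRange, sum_Icc_succ_top (by omega)]
  push_cast
  field_simp
  ring

theorem reflTransGen_advance_base {n : ℕ} (i₀ : Fin n) (k : ℕ) {a ε : ℝ}
    (hε : 2 * (n + k + 1) * ε = 1) {D : ℝ →₀ ℝ} (hD : 0 ≤ D) :
    parked n a (D + single a ((n : ℝ) + k + 1)) ⟶*
      parked n (a + ε) (D + single (a + ε) (n * ε) + single (a + ε) ((n : ℝ) + k)) := by
  have hpos : (0 : ℝ) < 2 * (n + k + 1) := by positivity
  have hε0 : 0 < ε := pos_of_mul_pos_right (by rw [hε]; exact one_pos) hpos.le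
  have hε1 : ε ≤ 1 / 2 := by nlinarith
  have hb : |a + ε - a| = ε := by simp [hε0.le]
  calc parked n a (D + single a ((n : ℝ) + k + 1))
      = parked n a (D + single a (n : ℝ) + single a ((k + 1 : ℕ) : ℝ)) := by
        rw [add_assoc D, ← single_add, Nat.cast_succ, add_assoc]
    _ ⟶* parked n a (D + single a (n : ℝ) + single (a + ε) ((k + 1 : ℕ) * (1 - 2 * ε))) := by
        simpa only [hb] using reflTransGen_ferry i₀ (k + 1)
          (add_nonneg hD (single_nonneg.2 n.cast_nonneg)) (hb.trans_le hε1)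
    _ = parked n a (D + single (a + ε) ((k + 1 : ℕ) * (1 - 2 * ε)) + single a ((n : ℝ) * 1)) := by
        rw [add_right_comm, mul_one]
    _ ⟶* parked n (a + ε) (D + single (a + ε) ((k + 1 : ℕ) * (1 - 2 * ε))
          + single (a + ε) (n * (1 - ε))) := by
        simpa only [hb] using reflTransGen_convoy_univ
          (add_nonneg hD (single_nonneg.2 (mul_nonneg (Nat.cast_nonneg _) (by linarith))))
          (hb.trans_le (by linarith)) le_rfl
    _ = parked n (a + ε) (D + single (a + ε) (n * ε) + single (a + ε) ((n : ℝ) + k)) := by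
        rw [add_assoc, add_assoc, ← single_add, ← single_add]
        congr 3
        push_cast
        linear_combination -hε

theorem exists_roundTrip {n : ℕ} (i₀ : Fin n) (k : ℕ) (a : ℝ) {D : ℝ →₀ ℝ} (hD : 0 ≤ D) :
    ∃ u : MultiState n, (∀ i, u.pos i = a + roundTripRange n (n + k)) ∧
      parked n a (D + single a ((n : ℝ) + k)) ⟶* u ∧ u ⟶* parked n a D := by
  induction k generalizing a D with
  | zero =>
    have hmid : |a + 1 / 2 - a| = 1 / 2 := by norm_num
    refine ⟨parked n (a + 1 / 2) (D + single (a + 1 / 2) ((n : ℝ) * (1 / 2))),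
      fun _ => by simp [parked, roundTripRange_self], ?_, ?_⟩
    · convert reflTransGen_convoy_univ (N := n) (b := a + 1 / 2) hD
        (hmid.trans_le (by norm_num)) le_rfl using 5 <;> norm_num
    · convert reflTransGen_convoy_univ (N := n) (b := a) hD
        (abs_sub_comm a _ ▸ hmid).le (by norm_num) using 3
      simp
  | succ k ih =>
    set ε : ℝ := 1 / (2 * (n + k + 1)) with hεdef
    have hε : 2 * (n + k + 1) * ε = 1 := by rw [hεdef]; field_simp
    have hε0 : 0 ≤ ε := by positivity
    have hε1 : ε ≤ 1 := by
      rw [hεdef, div_le_one (by positivity)]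
      linarith [(by positivity : (0 : ℝ) ≤ n + k)]
    have hb : |a - (a + ε)| = ε := by simp [hε0]
    obtain ⟨u, hu, hout, hback⟩ := ih (a + ε) (D := D + single (a + ε) (n * ε))
      (add_nonneg hD (single_nonneg.2 (by positivity)))
    refine ⟨u, fun i => ?_, ?_, ?_⟩
    · rw [hu, ← add_assoc n, roundTripRange_succ (by omega)]
      push_cast
      ring
    · rw [Nat.cast_succ, ← add_assoc]
      exact (reflTransGen_advance_base i₀ k hε hD).trans hout
    · convert hback.trans (reflTransGen_convoy_univ hD hb.le hε1) using 3
      simp [abs_of_nonneg hε0]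

/-- With exactly `n ≥ 1` jeeps and `x ≥ n` tankloads, there is a plan in which
every jeep reaches a state with position `1/2 + (1/2)·Σ_{j=n+1}^{x} 1/j` and
every jeep is at position `0` in the final state: all `n` jeeps can make a
round trip to this distance. -/
theorem multi_roundtrip_reachable (n x : ℕ) (hn : 1 ≤ n) (hx : n ≤ x) :
    ∃ (k : ℕ) (f : ℕ → MultiState n),
      f 0 = multiInit n (x : ℝ) ∧
      (∀ j < k, MultiStep (f j) (f (j + 1))) ∧
      (∀ i : Fin n, ∃ j ≤ k,
        (f j).pos i = 1 / 2 + 1 / 2 * ∑ l ∈ Finset.Icc (n + 1) x, 1 / (l : ℝ)) ∧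
      (∀ i : Fin n, (f k).pos i = 0) := by
  obtain ⟨k, rfl⟩ := Nat.exists_eq_add_of_le hx
  obtain ⟨u, hu, hout, hback⟩ := exists_roundTrip ⟨0, hn⟩ k 0 le_rfl
  have hinit : parked n 0 (0 + single 0 ((n : ℝ) + k)) = multiInit n ((n + k : ℕ) : ℝ) := by
    rw [zero_add, Nat.cast_add]
    rfl
  obtain ⟨K, f, hf0, hfK, hf, j, hj, hfj⟩ := hout.exists_seq_through hback
  refine ⟨K, f, hf0.trans hinit, hf, fun i => ⟨j, hj, ?_⟩, fun i => by rw [hfK]; rfl⟩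
  rw [hfj, hu, zero_add, roundTripRange]
end
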